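/- arXiv:1609.01531 — 5 statements merged into one kernel-verified Lean document; each statement's English description precedes it below -/
import Mathlib

section
/- Let A ∈ ℝ^{m×n}, y ∈ ℝ^m, 0 < q ≤ 1, and let σ > 0 satisfy σ < ‖y‖₂. If x* is a global minimizer of the function x ↦ ∑_{i=1}^n |x_i|^q over the feasible set {x ∈ ℝⁿ : ‖y − Ax‖₂ ≤ σ}, then the constraint is active at x*, i.e. ‖y − Ax*‖₂ = σ. -/
/-! If the constraint were slack at `x*`, then `x* ≠ 0` because `0` is infeasible, and by
continuity of the residual `t • x*` is still feasible for some `t ∈ (0, 1)`. Since `∑ |xᵢ|^q`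
is positively `q`-homogeneous, `t • x*` has the strictly smaller objective `t^q ∑ |x*ᵢ|^q`. -/

open Finset Filter Set Topology

section LqSum

variable {ι : Type*} [Fintype ι]

lemma sum_abs_rpow_smul {t : ℝ} (ht : 0 ≤ t) (q : ℝ) (x : ι → ℝ) :
    ∑ i, |(t • x) i| ^ q = t ^ q * ∑ i, |x i| ^ q := by
  rw [mul_sum]
  refine sum_congr rfl fun i _ => ?_
  rw [Pi.smul_apply, smul_eq_mul, abs_mul, abs_of_nonneg ht, Real.mul_rpow ht (abs_nonneg _)]

lemma sum_abs_rpow_pos {x : ι → ℝ} (hx : x ≠ 0) (q : ℝ) : 0 < ∑ i, |x i| ^ q := by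
  obtain ⟨i, hi⟩ := Function.ne_iff.mp hx
  exact sum_pos' (fun j _ => Real.rpow_nonneg (abs_nonneg _) q)
    ⟨i, mem_univ i, Real.rpow_pos_of_pos (abs_pos.mpr hi) q⟩

lemma sum_abs_rpow_smul_lt {q t : ℝ} (hq : 0 < q) (ht : t ∈ Ioo (0 : ℝ) 1) {x : ι → ℝ}
    (hx : x ≠ 0) : ∑ i, |(t • x) i| ^ q < ∑ i, |x i| ^ q := by
  rw [sum_abs_rpow_smul ht.1.le]
  exact mul_lt_of_lt_one_left (sum_abs_rpow_pos hx q) (Real.rpow_lt_one ht.1.le ht.2 hq)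

end LqSum

lemma exists_smul_lt_of_continuous {E : Type*} [AddCommGroup E] [Module ℝ E]
    [TopologicalSpace E] [ContinuousSMul ℝ E] {f : E → ℝ} (hf : Continuous f) {x : E} {σ : ℝ}
    (hx : f x < σ) : ∃ t ∈ Ioo (0 : ℝ) 1, f (t • x) < σ := by
  have hcont : ContinuousAt (fun t : ℝ => f (t • x)) 1 := by fun_prop
  have hnear : ∀ᶠ t in 𝓝[<] (1 : ℝ), f (t • x) < σ :=
    nhdsWithin_le_nhds (hcont.eventually_lt continuousAt_const (by simpa using hx))
  exact (Eventually.and (Ioo_mem_nhdsLT zero_lt_one) hnear).exists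

lemma continuous_sqrt_sum_sq_sub_mulVec {m n : ℕ} (A : Matrix (Fin m) (Fin n) ℝ)
    (y : Fin m → ℝ) : Continuous fun x => Real.sqrt (∑ k, (y k - A.mulVec x k) ^ 2) := by
  fun_prop

theorem constraint_active_at_lq_minimizer_general (m n : ℕ) (A : Matrix (Fin m) (Fin n) ℝ)
    (y : Fin m → ℝ) (q σ : ℝ) (hq0 : 0 < q)
    (hy : σ < Real.sqrt (∑ k, (y k) ^ 2))
    (xs : Fin n → ℝ)
    (hfeas : Real.sqrt (∑ k, (y k - A.mulVec xs k) ^ 2) ≤ σ)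
    (hmin : ∀ x : Fin n → ℝ, Real.sqrt (∑ k, (y k - A.mulVec x k) ^ 2) ≤ σ →
      (∑ i, |xs i| ^ q) ≤ ∑ i, |x i| ^ q) :
    Real.sqrt (∑ k, (y k - A.mulVec xs k) ^ 2) = σ := by
  by_contra hne
  have hxs : xs ≠ 0 := by
    rintro rfl
    simp only [Matrix.mulVec_zero, Pi.zero_apply, sub_zero] at hfeas
    linarith
  obtain ⟨t, ht, hfeas_t⟩ := exists_smul_lt_of_continuous
    (continuous_sqrt_sum_sq_sub_mulVec A y) (lt_of_le_of_ne hfeas hne)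
  exact (hmin (t • xs) hfeas_t.le).not_gt (sum_abs_rpow_smul_lt hq0 ht hxs)

/-- Lemma 5: if `σ < ‖y‖₂`, then at any global minimizer `x*` of the ℓq
quasi-norm over `{x : ‖y - Ax‖₂ ≤ σ}` the constraint is active: `‖y - Ax*‖₂ = σ`. -/
theorem constraint_active_at_lq_minimizer (m n : ℕ) (A : Matrix (Fin m) (Fin n) ℝ)
    (y : Fin m → ℝ) (q σ : ℝ) (hq0 : 0 < q) (hq1 : q ≤ 1) (hσ : 0 < σ)
    (hy : σ < Real.sqrt (∑ k, (y k) ^ 2))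
    (xs : Fin n → ℝ)
    (hfeas : Real.sqrt (∑ k, (y k - A.mulVec xs k) ^ 2) ≤ σ)
    (hmin : ∀ x : Fin n → ℝ, Real.sqrt (∑ k, (y k - A.mulVec x k) ^ 2) ≤ σ →
      (∑ i, |xs i| ^ q) ≤ ∑ i, |x i| ^ q) :
    Real.sqrt (∑ k, (y k - A.mulVec xs k) ^ 2) = σ :=
  constraint_active_at_lq_minimizer_general m n A y q σ hq0 hy xs hfeas hmin
end

section
/- Let x₀, e ∈ ℝⁿ, let 0 < q ≤ 1, and let S = {i : (x₀)_i ≠ 0} denote the support of x₀. Then ∑_{i=1}^n |(x₀)_i + e_i|^q − ∑_{i=1}^n |(x₀)_i|^q ≥ ∑_{i=1}^n |e_i|^q − 2·∑_{i∈S} |e_i|^q. -/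
open Finset

theorem abs_rpow_le_abs_add_rpow_add_abs_rpow {q : ℝ} (a b : ℝ) (hq0 : 0 ≤ q) (hq1 : q ≤ 1) :
    |a| ^ q ≤ |a + b| ^ q + |b| ^ q :=
  calc |a| ^ q = |(a + b) - b| ^ q := by rw [add_sub_cancel_right]
    _ ≤ (|a + b| + |b|) ^ q := by gcongr; exact abs_sub _ _
    _ ≤ |a + b| ^ q + |b| ^ q :=
      Real.rpow_add_le_add_rpow (abs_nonneg _) (abs_nonneg _) hq0 hq1

/-- The coordinatewise consequence of Lemma 2 used in the proof of Theorem 1: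
`‖x₀ + e‖_q^q - ‖x₀‖_q^q ≥ ‖e‖_q^q - 2 ∑_{i ∈ S} |e i|^q`, where `S` is the
support of `x₀`. -/
theorem lq_support_splitting (n : ℕ) (x₀ e : Fin n → ℝ) (q : ℝ)
    (hq0 : 0 < q) (hq1 : q ≤ 1) :
    (∑ i, |e i| ^ q) - 2 * ∑ i ∈ Finset.univ.filter (fun i => x₀ i ≠ 0), |e i| ^ q ≤
      (∑ i, |x₀ i + e i| ^ q) - ∑ i, |x₀ i| ^ q := by
  set S := univ.filter fun i => x₀ i ≠ 0
  set Z := univ.filter fun i => ¬x₀ i ≠ 0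
  have on_support : ∑ i ∈ S, |x₀ i| ^ q ≤ ∑ i ∈ S, |x₀ i + e i| ^ q + ∑ i ∈ S, |e i| ^ q := by
    rw [← sum_add_distrib]
    exact sum_le_sum fun i _ => abs_rpow_le_abs_add_rpow_add_abs_rpow _ _ hq0.le hq1
  have off_support : ∀ i ∈ Z, |x₀ i + e i| ^ q = |e i| ^ q ∧ |x₀ i| ^ q = 0 := by
    intro i hi
    rw [of_not_not (mem_filter.1 hi).2, zero_add, abs_zero, Real.zero_rpow hq0.ne']
    exact ⟨rfl, rfl⟩
  rw [← sum_filter_add_sum_filter_not univ (fun i => x₀ i ≠ 0) (fun i => |e i| ^ q),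
    ← sum_filter_add_sum_filter_not univ (fun i => x₀ i ≠ 0) (fun i => |x₀ i + e i| ^ q),
    ← sum_filter_add_sum_filter_not univ (fun i => x₀ i ≠ 0) (fun i => |x₀ i| ^ q),
    sum_congr rfl fun i hi => (off_support i hi).1, sum_congr rfl fun i hi => (off_support i hi).2,
    sum_const_zero]
  linarith
end

section
/- Let A ∈ ℝ^{m×n} have columns A_1,…,A_n each of unit Euclidean norm, and let M ≥ 0 satisfy |A_iᵀA_j| ≤ M for all i ≠ j. Then for every e ∈ ℝⁿ, ‖Ae‖₂² ≥ (1+M)·‖e‖₂² − M·‖e‖₁². -/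
/-!
Expand `‖Ae‖₂² = eᵀ G e` with the Gram matrix `G = AᵀA`. Its diagonal is `1`, and each
off-diagonal term satisfies `eᵢ eⱼ Gᵢⱼ ≥ -M |eᵢ| |eⱼ|`. Since the diagonal terms `eᵢ²` equal
`(1 + M) eᵢ² - M |eᵢ|²`, every term of the double sum is bounded below by
`(1 + M) δᵢⱼ eᵢ² - M |eᵢ| |eⱼ|`, whose double sum is `(1 + M)‖e‖₂² - M‖e‖₁²`.
-/

open Matrix Finset

namespace Matrix

theorem dotProduct_mulVec_eq_sum_sum {ι : Type*} [Fintype ι] (G : Matrix ι ι ℝ) (e : ι → ℝ) :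
    e ⬝ᵥ G *ᵥ e = ∑ i, ∑ j, e i * e j * G i j := by
  simp only [dotProduct, mulVec, Finset.mul_sum]
  exact sum_congr rfl fun i _ => sum_congr rfl fun j _ => by ring

theorem sum_sq_mulVec_eq_dotProduct_transpose_mul_mulVec {m n : Type*} [Fintype m] [Fintype n]
    (A : Matrix m n ℝ) (e : n → ℝ) :
    ∑ k, (A *ᵥ e) k ^ 2 = e ⬝ᵥ (Aᵀ * A) *ᵥ e := by
  rw [← mulVec_mulVec, dotProduct_mulVec, vecMul_transpose]
  simp only [dotProduct, sq]

theorem quadratic_lower_bound_of_unit_diag_of_abs_offDiag_le {ι : Type*} [Fintype ι]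
    (G : Matrix ι ι ℝ) (M : ℝ) (hdiag : ∀ i, G i i = 1)
    (hoff : ∀ i j, i ≠ j → |G i j| ≤ M) (e : ι → ℝ) :
    (1 + M) * ∑ i, e i ^ 2 - M * (∑ i, |e i|) ^ 2 ≤ e ⬝ᵥ G *ᵥ e := by
  classical
  have term_bound : ∀ i j,
      (1 + M) * (if i = j then e i ^ 2 else 0) - M * (|e i| * |e j|) ≤ e i * e j * G i j := by
    intro i j
    by_cases hij : i = j
    · subst hij
      rw [if_pos rfl, hdiag, abs_mul_abs_self, sq]
      exact le_of_eq (by ring)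
    · rw [if_neg hij, mul_zero, zero_sub, neg_le]
      calc -(e i * e j * G i j) ≤ |e i * e j * G i j| := neg_le_abs _
        _ = |e i| * |e j| * |G i j| := by rw [abs_mul, abs_mul]
        _ ≤ |e i| * |e j| * M := by gcongr; exact hoff i j hij
        _ = M * (|e i| * |e j|) := mul_comm _ _
  calc (1 + M) * ∑ i, e i ^ 2 - M * (∑ i, |e i|) ^ 2
      = ∑ i, ∑ j, ((1 + M) * (if i = j then e i ^ 2 else 0) - M * (|e i| * |e j|)) := by
        simp only [sum_sub_distrib, ← Finset.mul_sum, sum_ite_eq, mem_univ, if_true, sq,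
          sum_mul_sum]
    _ ≤ ∑ i, ∑ j, e i * e j * G i j := sum_le_sum fun i _ => sum_le_sum fun j _ => term_bound i j
    _ = e ⬝ᵥ G *ᵥ e := (dotProduct_mulVec_eq_sum_sum G e).symm

end Matrix

theorem mutual_coherence_quadratic_bound_general (m n : ℕ) (A : Matrix (Fin m) (Fin n) ℝ)
    (M : ℝ)
    (hcols : ∀ j, ∑ k, (A k j) ^ 2 = 1)
    (hcoh : ∀ i j, i ≠ j → |∑ k, A k i * A k j| ≤ M)
    (e : Fin n → ℝ) :
    (1 + M) * (∑ i, (e i) ^ 2) - M * (∑ i, |e i|) ^ 2 ≤ ∑ k, (A.mulVec e k) ^ 2 := by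
  have gram_apply : ∀ i j, (Aᵀ * A) i j = ∑ k, A k i * A k j := fun i j => by
    simp only [mul_apply, transpose_apply]
  rw [sum_sq_mulVec_eq_dotProduct_transpose_mul_mulVec]
  refine quadratic_lower_bound_of_unit_diag_of_abs_offDiag_le _ M (fun i => ?_)
    (fun i j hij => gram_apply i j ▸ hcoh i j hij) e
  rw [gram_apply, ← hcols i]
  simp only [sq]

/-- Gram-matrix lower bound from the proof of Theorem 1: if the columns of `A`
have unit Euclidean norm and pairwise inner products bounded in absolute value
by `M ≥ 0`, then `‖Ae‖₂² ≥ (1+M)‖e‖₂² - M‖e‖₁²` for every `e`. -/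
theorem mutual_coherence_quadratic_bound (m n : ℕ) (A : Matrix (Fin m) (Fin n) ℝ)
    (M : ℝ) (hM : 0 ≤ M)
    (hcols : ∀ j, ∑ k, (A k j) ^ 2 = 1)
    (hcoh : ∀ i j, i ≠ j → |∑ k, A k i * A k j| ≤ M)
    (e : Fin n → ℝ) :
    (1 + M) * (∑ i, (e i) ^ 2) - M * (∑ i, |e i|) ^ 2 ≤ ∑ k, (A.mulVec e k) ^ 2 :=
  mutual_coherence_quadratic_bound_general m n A M hcols hcoh e
end

section
/- Let 0 < q ≤ 1 and let N ≥ 1 be an integer. For all real numbers τ, η_S, η_{S^c} with 0 ≤ τ ≤ 1, N^{1−2/q} ≤ η_S ≤ 1, and 0 < η_{S^c} ≤ 1, the quantity μ = (1+τ)^{2/q} / (η_S + η_{S^c}·τ^{2/q}) satisfies 1 ≤ μ ≤ 4^{1/q}·N^{2/q−1}. -/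
/-!
Write `p = 2 / q ≥ 1`. Superadditivity of `x ↦ x ^ p` gives `(1 + τ) ^ p ≥ 1 + τ ^ p`, which
dominates the denominator since both weights are at most `1`; this is the lower bound. For the upper
bound, `τ ≤ 1` caps the numerator by `2 ^ p`, while the denominator is at least
`η_S ≥ N ^ (1 - p)`, and `2 ^ p N ^ (p - 1) = 4 ^ (1 / q) N ^ (2 / q - 1)`.
-/

open Real

lemma one_le_one_add_rpow_div {p a b τ : ℝ} (hp : 1 ≤ p) (hτ : 0 ≤ τ) (ha0 : 0 < a) (ha1 : a ≤ 1)
    (hb0 : 0 ≤ b) (hb1 : b ≤ 1) : 1 ≤ (1 + τ) ^ p / (a + b * τ ^ p) := by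
  have hτp : 0 ≤ τ ^ p := rpow_nonneg hτ p
  have hden : 0 < a + b * τ ^ p := by positivity
  rw [one_le_div hden]
  calc a + b * τ ^ p ≤ 1 + τ ^ p := add_le_add ha1 (mul_le_of_le_one_left hτp hb1)
    _ = 1 ^ p + τ ^ p := by rw [one_rpow]
    _ ≤ (1 + τ) ^ p := add_rpow_le_rpow_add zero_le_one hτ hp

lemma one_add_rpow_div_le {p a b c τ : ℝ} (hp : 0 ≤ p) (hτ0 : 0 ≤ τ) (hτ1 : τ ≤ 1) (hc : 0 < c)
    (hca : c ≤ a) (hb : 0 ≤ b) : (1 + τ) ^ p / (a + b * τ ^ p) ≤ 2 ^ p / c := by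
  have hden : c ≤ a + b * τ ^ p := le_add_of_le_of_nonneg hca (mul_nonneg hb (rpow_nonneg hτ0 p))
  have hnum : (1 + τ) ^ p ≤ 2 ^ p := rpow_le_rpow (by linarith) (by linarith) hp
  exact div_le_div₀ (by positivity) hnum hc hden

lemma two_rpow_div_rpow_one_sub {x : ℝ} (hx : 0 ≤ x) (q : ℝ) :
    (2 : ℝ) ^ (2 / q) / x ^ (1 - 2 / q) = (4 : ℝ) ^ (1 / q) * x ^ (2 / q - 1) := by
  rw [show (4 : ℝ) = 2 ^ (2 : ℝ) by norm_num, ← rpow_mul zero_le_two, div_eq_mul_inv,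
    ← rpow_neg hx, neg_sub, mul_one_div]

/-- Two-sided bound on the auxiliary quantity `μ = (1+τ)^{2/q}/(η_S + η_{S^c} τ^{2/q})`
used in the proof of Theorem 1: `1 ≤ μ ≤ 4^{1/q} N^{2/q-1}`. -/
theorem mu_two_sided_bound (q : ℝ) (hq0 : 0 < q) (hq1 : q ≤ 1) (N : ℕ) (hN : 1 ≤ N)
    (τ ηS ηSc : ℝ) (hτ0 : 0 ≤ τ) (hτ1 : τ ≤ 1)
    (hηS0 : (N : ℝ) ^ (1 - 2 / q) ≤ ηS) (hηS1 : ηS ≤ 1)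
    (hηSc0 : 0 < ηSc) (hηSc1 : ηSc ≤ 1) :
    1 ≤ (1 + τ) ^ (2 / q) / (ηS + ηSc * τ ^ (2 / q)) ∧
      (1 + τ) ^ (2 / q) / (ηS + ηSc * τ ^ (2 / q)) ≤
        (4 : ℝ) ^ (1 / q) * (N : ℝ) ^ (2 / q - 1) := by
  have hp : 1 ≤ 2 / q := by rw [le_div_iff₀ hq0]; linarith
  have hNpow : 0 < (N : ℝ) ^ (1 - 2 / q) := rpow_pos_of_pos (by exact_mod_cast hN) _
  refine ⟨one_le_one_add_rpow_div hp hτ0 (hNpow.trans_le hηS0) hηS1 hηSc0.le hηSc1, ?_⟩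
  rw [← two_rpow_div_rpow_one_sub (Nat.cast_nonneg N)]
  exact one_add_rpow_div_le (by linarith) hτ0 hτ1 hNpow hηS0 hηSc0.le
end

section
/- Let A ∈ ℝ^{m×n} have columns A_1,…,A_n each of unit Euclidean norm, with mutual coherence M = max_{i≠j}|A_iᵀA_j| > 0, and let 0 < q ≤ 1. Let x₀ ∈ ℝⁿ have exactly N ≥ 1 nonzero entries, let w ∈ ℝ^m satisfy ‖w‖₂ ≤ ε with 0 < ε ≤ σ, and set y = Ax₀ + w. Let x* be a global minimizer of x ↦ ∑_{i=1}^n |x_i|^q over {x ∈ ℝⁿ : ‖y − Ax‖₂ ≤ σ}, set e = x* − x₀, and suppose γ > 0 satisfies (γN)^{1/q−1}·‖e‖₁ ≤ ‖e‖_q. If N < γ^{2/q−2}·(M+1)/(4^{1/q}·M), then ‖x* − x₀‖₂² ≤ (ε+σ)² / (1 − M·(4^{1/q}·N/γ^{2/q−2} − 1)). -/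
/-!
Since `x₀` is feasible, minimality of `x*` gives `‖x*‖_q^q ≤ ‖x₀‖_q^q`, and subadditivity of
`t ↦ t^q` turns this into the cone condition `‖e‖_q^q ≤ 2 ‖e_T‖_q^q` on the support `T` of `x₀`.
The power-mean inequality on `T` and the `γ`-condition then give
`‖e‖₁² ≤ 4^{1/q} N γ^{2-2/q} ‖e‖₂²`. On the other side, unit columns and coherence `M` give
`‖Ae‖₂² ≥ (1 + M) ‖e‖₂² - M ‖e‖₁²`, while `‖Ae‖₂ = ‖w - (y - Ax*)‖₂ ≤ ε + σ`.
-/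

open Finset Matrix

section

variable {ι κ : Type*}

lemma abs_add_rpow_le {q : ℝ} (hq0 : 0 ≤ q) (hq1 : q ≤ 1) (a b : ℝ) :
    |a + b| ^ q ≤ |a| ^ q + |b| ^ q :=
  (Real.rpow_le_rpow (abs_nonneg _) (abs_add_le a b) hq0).trans
    (Real.rpow_add_le_add_rpow (abs_nonneg a) (abs_nonneg b) hq0 hq1)

lemma sqrt_sum_sq_sub_le [Fintype κ] (u v : κ → ℝ) :
    √(∑ k, (u k - v k) ^ 2) ≤ √(∑ k, u k ^ 2) + √(∑ k, v k ^ 2) := by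
  have h := norm_sub_le (WithLp.toLp 2 u : EuclideanSpace ℝ κ) (WithLp.toLp 2 v)
  simpa only [← WithLp.toLp_sub, EuclideanSpace.norm_eq, PiLp.toLp_apply, Pi.sub_apply,
    Real.norm_eq_abs, sq_abs] using h

lemma rpow_sum_abs_rpow_le_card_mul_sum_abs_rpow (s : Finset ι) (f : ι → ℝ) {p q : ℝ}
    (hq : 0 < q) (hqp : q ≤ p) :
    (∑ i ∈ s, |f i| ^ q) ^ (p / q) ≤ (#s : ℝ) ^ (p / q - 1) * ∑ i ∈ s, |f i| ^ p := by
  have h := Real.rpow_sum_le_const_mul_sum_rpow s (fun i => |f i| ^ q) ((one_le_div hq).2 hqp)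
  simpa only [abs_of_nonneg (Real.rpow_nonneg (abs_nonneg _) _), ← Real.rpow_mul (abs_nonneg _),
    mul_div_cancel₀ p hq.ne'] using h

lemma sum_abs_sub_rpow_le_two_mul_sum_support [Fintype ι] {q : ℝ} (hq0 : 0 < q) (hq1 : q ≤ 1)
    {x x₀ : ι → ℝ} (hx : ∑ i, |x i| ^ q ≤ ∑ i, |x₀ i| ^ q) :
    ∑ i, |x i - x₀ i| ^ q ≤ 2 * ∑ i ∈ univ.filter (fun i => x₀ i ≠ 0), |x i - x₀ i| ^ q := by
  have key : ∀ i, |x i - x₀ i| ^ q - 2 * (if x₀ i ≠ 0 then |x i - x₀ i| ^ q else 0) ≤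
      |x i| ^ q - |x₀ i| ^ q := by
    intro i
    split_ifs with h
    · have := abs_add_rpow_le hq0.le hq1 (x i) (x₀ i - x i)
      rw [add_sub_cancel, abs_sub_comm] at this
      linarith
    · simp [not_not.1 h, Real.zero_rpow hq0.ne']
  have := sum_le_sum fun i (_ : i ∈ univ) => key i
  rw [sum_filter]
  simp only [sum_sub_distrib, ← mul_sum] at this
  linarith

lemma rpow_sum_abs_sub_rpow_le_of_sum_abs_rpow_le [Fintype ι] {q : ℝ} (hq0 : 0 < q)
    (hq1 : q ≤ 1) {x x₀ : ι → ℝ} (hx : ∑ i, |x i| ^ q ≤ ∑ i, |x₀ i| ^ q) :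
    (∑ i, |x i - x₀ i| ^ q) ^ (2 / q) ≤
      4 ^ (1 / q) * (#(univ.filter fun i => x₀ i ≠ 0) : ℝ) ^ (2 / q - 1) *
        ∑ i, (x i - x₀ i) ^ 2 := by
  set T := univ.filter fun i => x₀ i ≠ 0
  have hpow : ∀ i, |x i - x₀ i| ^ (2 : ℝ) = (x i - x₀ i) ^ 2 := fun i => by
    rw [Real.rpow_two, sq_abs]
  calc (∑ i, |x i - x₀ i| ^ q) ^ (2 / q)
      ≤ (2 * ∑ i ∈ T, |x i - x₀ i| ^ q) ^ (2 / q) :=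
        Real.rpow_le_rpow (sum_nonneg fun i _ => by positivity)
          (sum_abs_sub_rpow_le_two_mul_sum_support hq0 hq1 hx) (by positivity)
    _ = 4 ^ (1 / q) * (∑ i ∈ T, |x i - x₀ i| ^ q) ^ (2 / q) := by
        rw [Real.mul_rpow zero_le_two (sum_nonneg fun i _ => by positivity),
          show (4 : ℝ) = 2 ^ (2 : ℝ) by norm_num, ← Real.rpow_mul zero_le_two]
        ring_nf
    _ ≤ 4 ^ (1 / q) * ((#T : ℝ) ^ (2 / q - 1) * ∑ i ∈ T, (x i - x₀ i) ^ 2) := by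
        gcongr
        simpa only [hpow] using
          rpow_sum_abs_rpow_le_card_mul_sum_abs_rpow T (fun i => x i - x₀ i) (p := 2) hq0
            (by linarith)
    _ ≤ 4 ^ (1 / q) * (#T : ℝ) ^ (2 / q - 1) * ∑ i, (x i - x₀ i) ^ 2 := by
        rw [mul_assoc]
        gcongr
        exact subset_univ T

lemma sq_le_of_mul_le_rpow {q γ N C S₁ S₂ S : ℝ} (hγ : 0 < γ) (hN : 0 < N) (hS₁ : 0 ≤ S₁)
    (hS : 0 ≤ S) (h₁ : (γ * N) ^ (1 / q - 1) * S₁ ≤ S ^ (1 / q))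
    (h₂ : S ^ (2 / q) ≤ C * N ^ (2 / q - 1) * S₂) :
    S₁ ^ 2 ≤ C * N / γ ^ (2 / q - 2) * S₂ := by
  have hsq : (γ * N) ^ (2 / q - 2) * S₁ ^ 2 ≤ S ^ (2 / q) := by
    rw [show 2 / q - 2 = (1 / q - 1) * (2 : ℕ) by push_cast; ring,
      show 2 / q = 1 / q * (2 : ℕ) by push_cast; ring, Real.rpow_mul_natCast (by positivity),
      Real.rpow_mul_natCast hS, ← mul_pow]
    exact pow_le_pow_left₀ (by positivity) h₁ 2
  have hNpow : N ^ (2 / q - 1) = N ^ (2 / q - 2) * N := by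
    rw [← Real.rpow_add_one hN.ne']; ring_nf
  rw [div_mul_eq_mul_div, le_div_iff₀ (by positivity)]
  refine le_of_mul_le_mul_left ?_ (by positivity : 0 < N ^ (2 / q - 2))
  calc N ^ (2 / q - 2) * (S₁ ^ 2 * γ ^ (2 / q - 2)) = (γ * N) ^ (2 / q - 2) * S₁ ^ 2 := by
        rw [Real.mul_rpow hγ.le hN.le]; ring
    _ ≤ C * N ^ (2 / q - 1) * S₂ := hsq.trans h₂
    _ = N ^ (2 / q - 2) * (C * N * S₂) := by rw [hNpow]; ring

lemma sum_mulVec_sq_eq [Fintype ι] [Fintype κ] (A : Matrix κ ι ℝ) (e : ι → ℝ) :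
    ∑ k, (A *ᵥ e) k ^ 2 = ∑ i, ∑ j, e i * e j * ∑ k, A k i * A k j := by
  simp only [Matrix.mulVec, dotProduct, sq, sum_mul, mul_sum]
  rw [sum_comm]
  refine sum_congr rfl fun i _ => ?_
  rw [sum_comm]
  exact sum_congr rfl fun j _ => sum_congr rfl fun k _ => by ring

lemma le_sum_sum_mul_of_diag_eq_one [Fintype ι] {G : ι → ι → ℝ} {M : ℝ}
    (hdiag : ∀ i, G i i = 1) (hoff : ∀ i j, i ≠ j → |G i j| ≤ M) (e : ι → ℝ) :
    (1 + M) * ∑ i, e i ^ 2 - M * (∑ i, |e i|) ^ 2 ≤ ∑ i, ∑ j, e i * e j * G i j := by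
  classical
  have key : ∀ i j, (if i = j then (1 + M) * e i ^ 2 else 0) - M * (|e i| * |e j|) ≤
      e i * e j * G i j := by
    intro i j
    split_ifs with h
    · subst h
      rw [hdiag, abs_mul_abs_self]
      linarith
    · have hbound : |e i * e j * G i j| ≤ M * (|e i| * |e j|) := by
        rw [abs_mul, abs_mul, mul_comm M]
        exact mul_le_mul_of_nonneg_left (hoff i j h) (by positivity)
      linarith [neg_abs_le (e i * e j * G i j)]
  calc (1 + M) * ∑ i, e i ^ 2 - M * (∑ i, |e i|) ^ 2
      = ∑ i, ∑ j, ((if i = j then (1 + M) * e i ^ 2 else 0) - M * (|e i| * |e j|)) := by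
        simp only [sum_sub_distrib, sum_ite_eq, mem_univ, if_true, ← mul_sum, sq, sum_mul_sum]
    _ ≤ _ := sum_le_sum fun i _ => sum_le_sum fun j _ => key i j

lemma le_sum_mulVec_sq_of_coherence [Fintype ι] [Fintype κ] (A : Matrix κ ι ℝ)
    (hcols : ∀ j, ∑ k, A k j ^ 2 = 1) {M : ℝ} (hM : ∀ i j, i ≠ j → |∑ k, A k i * A k j| ≤ M)
    (e : ι → ℝ) :
    (1 + M) * ∑ i, e i ^ 2 - M * (∑ i, |e i|) ^ 2 ≤ ∑ k, (A *ᵥ e) k ^ 2 := by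
  rw [sum_mulVec_sq_eq]
  exact le_sum_sum_mul_of_diag_eq_one (fun i => by simpa only [sq] using hcols i) hM e

end

theorem lq_stable_recovery_bound_general (m n N : ℕ) (hN : 1 ≤ N)
    (A : Matrix (Fin m) (Fin n) ℝ)
    (hcols : ∀ j, ∑ k, (A k j) ^ 2 = 1)
    (M : ℝ)
    (hM : IsGreatest {t : ℝ | ∃ i j : Fin n, i ≠ j ∧ t = |∑ k, A k i * A k j|} M)
    (q : ℝ) (hq0 : 0 < q) (hq1 : q ≤ 1)
    (x₀ : Fin n → ℝ)
    (hx₀ : (Finset.univ.filter (fun i => x₀ i ≠ 0)).card = N)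
    (w : Fin m → ℝ) (ε σ : ℝ) (hεσ : ε ≤ σ)
    (hw : Real.sqrt (∑ k, (w k) ^ 2) ≤ ε)
    (y : Fin m → ℝ) (hy : y = A.mulVec x₀ + w)
    (xs : Fin n → ℝ)
    (hfeas : Real.sqrt (∑ k, (y k - A.mulVec xs k) ^ 2) ≤ σ)
    (hmin : ∀ x : Fin n → ℝ, Real.sqrt (∑ k, (y k - A.mulVec x k) ^ 2) ≤ σ →
      (∑ i, |xs i| ^ q) ≤ ∑ i, |x i| ^ q)
    (γ : ℝ) (hγ : 0 < γ)
    (hγe : (γ * N) ^ (1 / q - 1) * (∑ i, |xs i - x₀ i|) ≤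
      (∑ i, |xs i - x₀ i| ^ q) ^ (1 / q))
    (hNs : (N : ℝ) < γ ^ (2 / q - 2) * (M + 1) / ((4 : ℝ) ^ (1 / q) * M)) :
    (∑ i, (xs i - x₀ i) ^ 2) ≤
      (ε + σ) ^ 2 / (1 - M * ((4 : ℝ) ^ (1 / q) * N / γ ^ (2 / q - 2) - 1)) := by
  have hNpos : (0 : ℝ) < N := by exact_mod_cast hN
  have hM0 : 0 ≤ M := by
    obtain ⟨i, j, -, rfl⟩ := hM.1
    exact abs_nonneg _
  have hx₀min : ∑ i, |xs i| ^ q ≤ ∑ i, |x₀ i| ^ q :=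
    hmin x₀ (by simpa only [hy, Pi.add_apply, add_sub_cancel_left] using hw.trans hεσ)
  have hl1 : (∑ i, |xs i - x₀ i|) ^ 2 ≤
      4 ^ (1 / q) * N / γ ^ (2 / q - 2) * ∑ i, (xs i - x₀ i) ^ 2 :=
    sq_le_of_mul_le_rpow hγ hNpos (sum_nonneg fun i _ => abs_nonneg _)
      (sum_nonneg fun i _ => by positivity) hγe
      (hx₀ ▸ rpow_sum_abs_sub_rpow_le_of_sum_abs_rpow_le hq0 hq1 hx₀min)
  have hgram : (1 + M) * ∑ i, (xs i - x₀ i) ^ 2 - M * (∑ i, |xs i - x₀ i|) ^ 2 ≤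
      ∑ k, (A *ᵥ (xs - x₀)) k ^ 2 :=
    le_sum_mulVec_sq_of_coherence A hcols (fun i j hij => hM.2 ⟨i, j, hij, rfl⟩) (xs - x₀)
  have hres : ∑ k, (A *ᵥ (xs - x₀)) k ^ 2 ≤ (ε + σ) ^ 2 := by
    have hAe : A *ᵥ (xs - x₀) = w - (y - A *ᵥ xs) := by
      rw [hy, Matrix.mulVec_sub]; abel
    rw [← Real.sqrt_le_left (by linarith [(Real.sqrt_nonneg _).trans hw]), hAe]
    exact (sqrt_sum_sq_sub_le w _).trans (add_le_add hw hfeas)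
  have hD : 0 < 1 - M * ((4 : ℝ) ^ (1 / q) * N / γ ^ (2 / q - 2) - 1) := by
    rcases hM0.eq_or_lt with rfl | hMpos
    · norm_num
    rw [lt_div_iff₀ (by positivity)] at hNs
    have : M * ((4 : ℝ) ^ (1 / q) * N / γ ^ (2 / q - 2)) < M + 1 := by
      rw [mul_div_assoc', div_lt_iff₀ (by positivity)]
      linarith
    linarith
  rw [le_div_iff₀ hD]
  linarith [mul_le_mul_of_nonneg_left hl1 hM0]

/-- Theorem 1 (main result): unified stable recovery bound for the noise-aware
ℓq model. `M` is the mutual coherence of `A` (the maximum of `|A_iᵀ A_j|` over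
`i ≠ j`), `x₀` has exactly `N` nonzero entries, `y = A x₀ + w` with `‖w‖₂ ≤ ε ≤ σ`,
`x*` is any global minimizer of `‖·‖_q^q` over `{x : ‖y - Ax‖₂ ≤ σ}`, and `γ > 0`
satisfies `(γN)^{1/q-1} ‖e‖₁ ≤ ‖e‖_q` for the error `e = x* - x₀`. If
`N < γ^{2/q-2}(M+1)/(4^{1/q} M)`, then
`‖x* - x₀‖₂² ≤ (ε+σ)²/(1 - M(4^{1/q} N / γ^{2/q-2} - 1))`. -/
theorem lq_stable_recovery_bound (m n N : ℕ) (hN : 1 ≤ N)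
    (A : Matrix (Fin m) (Fin n) ℝ)
    (hcols : ∀ j, ∑ k, (A k j) ^ 2 = 1)
    (M : ℝ) (hMpos : 0 < M)
    (hM : IsGreatest {t : ℝ | ∃ i j : Fin n, i ≠ j ∧ t = |∑ k, A k i * A k j|} M)
    (q : ℝ) (hq0 : 0 < q) (hq1 : q ≤ 1)
    (x₀ : Fin n → ℝ)
    (hx₀ : (Finset.univ.filter (fun i => x₀ i ≠ 0)).card = N)
    (w : Fin m → ℝ) (ε σ : ℝ) (hε : 0 < ε) (hεσ : ε ≤ σ)
    (hw : Real.sqrt (∑ k, (w k) ^ 2) ≤ ε)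
    (y : Fin m → ℝ) (hy : y = A.mulVec x₀ + w)
    (xs : Fin n → ℝ)
    (hfeas : Real.sqrt (∑ k, (y k - A.mulVec xs k) ^ 2) ≤ σ)
    (hmin : ∀ x : Fin n → ℝ, Real.sqrt (∑ k, (y k - A.mulVec x k) ^ 2) ≤ σ →
      (∑ i, |xs i| ^ q) ≤ ∑ i, |x i| ^ q)
    (γ : ℝ) (hγ : 0 < γ)
    (hγe : (γ * N) ^ (1 / q - 1) * (∑ i, |xs i - x₀ i|) ≤
      (∑ i, |xs i - x₀ i| ^ q) ^ (1 / q))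
    (hNs : (N : ℝ) < γ ^ (2 / q - 2) * (M + 1) / ((4 : ℝ) ^ (1 / q) * M)) :
    (∑ i, (xs i - x₀ i) ^ 2) ≤
      (ε + σ) ^ 2 / (1 - M * ((4 : ℝ) ^ (1 / q) * N / γ ^ (2 / q - 2) - 1)) :=
  lq_stable_recovery_bound_general m n N hN A hcols M hM q hq0 hq1 x₀ hx₀ w ε σ hεσ hw y hy xs hfeas
    hmin γ hγ hγe hNs
end
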